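/- Let X : [0,∞) → GL(n,ℝ), and let L, R : [0,∞) → GL(n,ℝ) be families of matrices such that ‖L(t)‖, ‖L(t)⁻¹‖, ‖R(t)‖, ‖R(t)⁻¹‖ are uniformly bounded in t. Then for each i, limsup_{t→∞} (1/t)·ln σ_i^o(L(t)·X(t)·R(t)) = limsup_{t→∞} (1/t)·ln σ_i^o(X(t)), provided the latter is finite. -/

import Mathlib

open Matrix Filter

/-- The k-th largest singular value (0-indexed) of a real square matrix:
square roots of the eigenvalues of `Xᵀ * X`, sorted in decreasing order. -/
noncomputable def svalDesc {n : ℕ} (X : Matrix (Fin n) (Fin n) ℝ) (k : Fin n) : ℝ :=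
  Real.sqrt (((show (Xᵀ * X).IsHermitian by
      simpa using Matrix.isHermitian_conjTranspose_mul_self X).eigenvalues ∘
    Tuple.sort ((show (Xᵀ * X).IsHermitian by
      simpa using Matrix.isHermitian_conjTranspose_mul_self X).eigenvalues)) k.rev)

/-- Euclidean norm of the j-th column of X. -/
noncomputable def colNorm {n : ℕ} (X : Matrix (Fin n) (Fin n) ℝ) (j : Fin n) : ℝ :=
  Real.sqrt (∑ i, (X i j) ^ 2)

/-!
By Courant–Fischer, `σₖ(M) ≤ c` as soon as `‖M v‖ ≤ c ‖v‖` on a subspace of codimension `k`,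
and the right singular vectors of `T` from index `k` on span such a subspace with `c = σₖ(T)`.
Pulling that subspace back along `R` gives `σₖ(L X R) ≤ ‖L‖ ‖R‖ σₖ(X)`, and the same argument
with `L⁻¹`, `R⁻¹` gives the reverse bound. Hence `log σₖ(L X R) - log σₖ(X)` is bounded
uniformly in `t`; divided by `t` it tends to `0`, which leaves the `limsup` unchanged.
-/

open Module InnerProductSpace Topology

namespace OrthonormalBasis

variable {ι 𝕜 E : Type*} [RCLike 𝕜] [NormedAddCommGroup E] [InnerProductSpace 𝕜 E]
  [Fintype ι] (b : OrthonormalBasis ι 𝕜 E)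

theorem inner_eq_zero_of_mem_span_image {S : Set ι} {v : E}
    (hv : v ∈ Submodule.span 𝕜 (b '' S)) {j : ι} (hj : j ∉ S) : ⟪b j, v⟫_𝕜 = 0 := by
  suffices Submodule.span 𝕜 (b '' S) ≤ LinearMap.ker (innerₛₗ 𝕜 (b j)) from this hv
  rw [Submodule.span_le]
  rintro _ ⟨k, hk, rfl⟩
  exact b.orthonormal.2 (ne_of_mem_of_not_mem hk hj).symm

theorem finrank_span_image (S : Finset ι) :
    finrank 𝕜 (Submodule.span 𝕜 (b '' S)) = S.card := by
  classical
  have hb := b.orthonormal.linearIndependent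
  have hind : LinearIndepOn 𝕜 id (b '' S) := (hb.linearIndepOn S).id_image
  rw [← Finset.coe_image] at hind ⊢
  rw [finrank_span_finset_eq_card hind, Finset.card_image_of_injective _ hb.injective]

end OrthonormalBasis

namespace LinearMap

variable {𝕜 E F : Type*} [RCLike 𝕜]
  [NormedAddCommGroup E] [InnerProductSpace 𝕜 E] [FiniteDimensional 𝕜 E]
  [NormedAddCommGroup F] [InnerProductSpace 𝕜 F] [FiniteDimensional 𝕜 F]
  (T : E →ₗ[𝕜] F) {n : ℕ} (hn : finrank 𝕜 E = n)

noncomputable abbrev rightSingularBasis : OrthonormalBasis (Fin n) 𝕜 E :=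
  T.isSymmetric_adjoint_comp_self.eigenvectorBasis hn

theorem norm_apply_sq_eq_sum (v : E) :
    ‖T v‖ ^ 2 =
      ∑ j : Fin n, T.singularValues j ^ 2 * ‖⟪T.rightSingularBasis hn j, v⟫_𝕜‖ ^ 2 := by
  set b := T.rightSingularBasis hn
  have hcoord (j : Fin n) : ⟪b j, (adjoint T ∘ₗ T) v⟫_𝕜 =
      (T.singularValues j ^ 2 : ℝ) * ⟪b j, v⟫_𝕜 := by
    rw [← T.isSymmetric_adjoint_comp_self, IsSymmetric.apply_eigenvectorBasis,
      inner_smul_left, RCLike.conj_ofReal, sq_singularValues_fin]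
  have h : (‖T v‖ ^ 2 : 𝕜) =
      ∑ j : Fin n, ((T.singularValues j ^ 2 * ‖⟪b j, v⟫_𝕜‖ ^ 2 : ℝ) : 𝕜) := by
    rw [← inner_self_eq_norm_sq_to_K, ← adjoint_inner_right, ← comp_apply,
      ← b.sum_inner_mul_inner]
    refine Finset.sum_congr rfl fun j _ => ?_
    rw [hcoord, ← inner_conj_symm, mul_left_comm, RCLike.conj_mul]
    push_cast
    ring
  exact_mod_cast h

theorem norm_apply_sq_le_of_mem_span {S : Finset (Fin n)} {c : ℝ}
    (hc : ∀ j ∈ S, T.singularValues j ^ 2 ≤ c) {v : E}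
    (hv : v ∈ Submodule.span 𝕜 (T.rightSingularBasis hn '' S)) :
    ‖T v‖ ^ 2 ≤ c * ‖v‖ ^ 2 := by
  rw [T.norm_apply_sq_eq_sum hn, ← (T.rightSingularBasis hn).sum_sq_norm_inner_right,
    Finset.mul_sum]
  refine Finset.sum_le_sum fun j _ => ?_
  by_cases hj : j ∈ S
  · exact mul_le_mul_of_nonneg_right (hc j hj) (by positivity)
  · simp [(T.rightSingularBasis hn).inner_eq_zero_of_mem_span_image hv hj]

theorem le_norm_apply_sq_of_mem_span {S : Finset (Fin n)} {c : ℝ}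
    (hc : ∀ j ∈ S, c ≤ T.singularValues j ^ 2) {v : E}
    (hv : v ∈ Submodule.span 𝕜 (T.rightSingularBasis hn '' S)) :
    c * ‖v‖ ^ 2 ≤ ‖T v‖ ^ 2 := by
  rw [T.norm_apply_sq_eq_sum hn, ← (T.rightSingularBasis hn).sum_sq_norm_inner_right,
    Finset.mul_sum]
  refine Finset.sum_le_sum fun j _ => ?_
  by_cases hj : j ∈ S
  · exact mul_le_mul_of_nonneg_right (hc j hj) (by positivity)
  · simp [(T.rightSingularBasis hn).inner_eq_zero_of_mem_span_image hv hj]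

omit hn in
theorem singularValues_le_of_forall_norm_apply_le {k : ℕ} (hk : k < finrank 𝕜 E)
    (W : Submodule 𝕜 E) (hW : finrank 𝕜 E ≤ finrank 𝕜 W + k) {c : ℝ}
    (hc : ∀ v ∈ W, ‖T v‖ ≤ c * ‖v‖) : T.singularValues k ≤ c := by
  set b := T.rightSingularBasis rfl
  set V := Submodule.span 𝕜 (b '' Finset.Iic (⟨k, hk⟩ : Fin (finrank 𝕜 E)))
  have hV : finrank 𝕜 V = k + 1 := by simp only [V, b.finrank_span_image, Fin.card_Iic]
  obtain ⟨v, ⟨hvV, hvW⟩, hv0⟩ : ∃ v ∈ V ⊓ W, v ≠ 0 := by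
    refine Submodule.exists_mem_ne_zero_of_ne_bot fun hVW => ?_
    have := Submodule.finrank_add_finrank_le_of_disjoint (disjoint_iff.mpr hVW)
    omega
  have hlow : T.singularValues k ^ 2 * ‖v‖ ^ 2 ≤ ‖T v‖ ^ 2 := by
    refine T.le_norm_apply_sq_of_mem_span rfl (fun j hj => ?_) hvV
    have hjk : j ≤ ⟨k, hk⟩ := Finset.mem_Iic.mp hj
    exact pow_le_pow_left₀ (T.singularValues_nonneg _) (T.singularValues_antitone hjk) 2
  have hv : 0 < ‖v‖ := norm_pos_iff.mpr hv0
  have hc0 : 0 ≤ c := nonneg_of_mul_nonneg_left ((norm_nonneg _).trans (hc v hvW)) hv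
  have hup : ‖T v‖ ^ 2 ≤ (c * ‖v‖) ^ 2 := pow_le_pow_left₀ (norm_nonneg _) (hc v hvW) 2
  rw [← sq_le_sq₀ (T.singularValues_nonneg k) hc0]
  rw [mul_pow] at hup
  exact le_of_mul_le_mul_right (hlow.trans hup) (by positivity)

omit hn in
theorem exists_finrank_add_le_forall_norm_apply_le (k : ℕ) :
    ∃ W : Submodule 𝕜 E, finrank 𝕜 E ≤ finrank 𝕜 W + k ∧
      ∀ v ∈ W, ‖T v‖ ≤ T.singularValues k * ‖v‖ := by
  by_cases hk : k < finrank 𝕜 E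
  · set b := T.rightSingularBasis rfl
    refine ⟨Submodule.span 𝕜 (b '' Finset.Ici (⟨k, hk⟩ : Fin (finrank 𝕜 E))), ?_, ?_⟩
    · simp only [b.finrank_span_image, Fin.card_Ici]
      omega
    · intro v hv
      have hsq : ‖T v‖ ^ 2 ≤ T.singularValues k ^ 2 * ‖v‖ ^ 2 := by
        refine T.norm_apply_sq_le_of_mem_span rfl (fun j hj => ?_) hv
        have hkj : ⟨k, hk⟩ ≤ j := Finset.mem_Ici.mp hj
        exact pow_le_pow_left₀ (T.singularValues_nonneg _) (T.singularValues_antitone hkj) 2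
      rw [← mul_pow] at hsq
      exact (sq_le_sq₀ (norm_nonneg _)
        (mul_nonneg (T.singularValues_nonneg k) (norm_nonneg v))).mp hsq
  · exact ⟨⊥, by simp only [finrank_bot, zero_add]; omega, by simp⟩

variable {G : Type*} [NormedAddCommGroup G] [InnerProductSpace 𝕜 G] [FiniteDimensional 𝕜 G]

omit hn in
theorem singularValues_comp_comp_le (A : F →ₗ[𝕜] G) (B : E →ₗ[𝕜] E)
    (hBsurj : Function.Surjective B) {a b : ℝ} (ha : 0 ≤ a) (hb : 0 ≤ b)
    (hA : ∀ w, ‖A w‖ ≤ a * ‖w‖) (hB : ∀ v, ‖B v‖ ≤ b * ‖v‖) (k : ℕ) :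
    (A ∘ₗ T ∘ₗ B).singularValues k ≤ a * b * T.singularValues k := by
  by_cases hk : k < finrank 𝕜 E
  · obtain ⟨W, hW, hTW⟩ := T.exists_finrank_add_le_forall_norm_apply_le k
    refine singularValues_le_of_forall_norm_apply_le _ hk (W.comap B) ?_ fun v hv => ?_
    · have := Submodule.finrank_map_le B (W.comap B)
      rw [Submodule.map_comap_eq_of_surjective hBsurj] at this
      omega
    · calc ‖A (T (B v))‖ ≤ a * ‖T (B v)‖ := hA _
        _ ≤ a * (T.singularValues k * ‖B v‖) := mul_le_mul_of_nonneg_left (hTW _ hv) ha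
        _ ≤ a * (T.singularValues k * (b * ‖v‖)) := by
          gcongr
          · exact T.singularValues_nonneg k
          · exact hB v
        _ = a * b * T.singularValues k * ‖v‖ := by ring
  · rw [singularValues_of_finrank_le _ (not_lt.mp hk)]
    exact mul_nonneg (mul_nonneg ha hb) (T.singularValues_nonneg k)

end LinearMap

theorem Matrix.norm_toEuclideanLin_apply_le {𝕜 ι : Type*} [RCLike 𝕜] [Fintype ι]
    [DecidableEq ι] (M : Matrix ι ι 𝕜) {c : ℝ} (hM : ∀ i j, ‖M i j‖ ≤ c)
    (v : EuclideanSpace 𝕜 ι) : ‖toEuclideanLin M v‖ ≤ Fintype.card ι * c * ‖v‖ := by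
  rcases isEmpty_or_nonempty ι with hι | ⟨⟨i₀⟩⟩
  · simp [Subsingleton.elim v 0]
  have hc : 0 ≤ c := (norm_nonneg _).trans (hM i₀ i₀)
  have hrow (i : ι) : ‖(toEuclideanLin M v) i‖ ≤ c * ∑ j, ‖v j‖ := by
    calc ‖(toEuclideanLin M v) i‖ = ‖∑ j, M i j * v j‖ := by simp [Matrix.mulVec, dotProduct]
      _ ≤ ∑ j, ‖M i j‖ * ‖v j‖ := by
        simpa only [norm_mul] using norm_sum_le Finset.univ fun j => M i j * v j
      _ ≤ ∑ j, c * ‖v j‖ := by gcongr with j; exact hM i j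
      _ = c * ∑ j, ‖v j‖ := (Finset.mul_sum _ _ _).symm
  have hsum : (∑ j, ‖v j‖) ^ 2 ≤ Fintype.card ι * ‖v‖ ^ 2 := by
    rw [EuclideanSpace.norm_sq_eq]
    exact sq_sum_le_card_mul_sum_sq
  have hsq : ‖toEuclideanLin M v‖ ^ 2 ≤ (Fintype.card ι * c * ‖v‖) ^ 2 := by
    calc ‖toEuclideanLin M v‖ ^ 2 = ∑ i, ‖(toEuclideanLin M v) i‖ ^ 2 :=
          EuclideanSpace.norm_sq_eq _
      _ ≤ ∑ _i : ι, (c * ∑ j, ‖v j‖) ^ 2 := by gcongr with i; exact hrow i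
      _ = Fintype.card ι * c ^ 2 * (∑ j, ‖v j‖) ^ 2 := by
        simp only [Finset.sum_const, Finset.card_univ, nsmul_eq_mul]
        ring
      _ ≤ Fintype.card ι * c ^ 2 * (Fintype.card ι * ‖v‖ ^ 2) := by gcongr
      _ = (Fintype.card ι * c * ‖v‖) ^ 2 := by ring
  exact (sq_le_sq₀ (norm_nonneg _) (by positivity)).mp hsq

theorem Tuple.comp_sort_eq_comp_rev_of_antitone {α : Type*} [LinearOrder α] {n : ℕ}
    {g : Fin n → α} (hg : Antitone g) (σ : Equiv.Perm (Fin n)) :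
    (g ∘ σ) ∘ Tuple.sort (g ∘ σ) = g ∘ Fin.rev := by
  have hrev : (g ∘ σ) ∘ (Fin.revPerm.trans σ.symm) = g ∘ Fin.rev := by
    ext i; simp
  rw [← hrev, eq_comm, Tuple.comp_sort_eq_comp_iff_monotone, hrev]
  exact hg.comp Fin.rev_anti

namespace LinearMap.IsSymmetric

variable {𝕜 E : Type*} [RCLike 𝕜] [NormedAddCommGroup E] [InnerProductSpace 𝕜 E]
  [FiniteDimensional 𝕜 E]

theorem eigenvalues_congr {S T : E →ₗ[𝕜] E} (hS : S.IsSymmetric) (hT : T.IsSymmetric)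
    (h : S = T) {m n : ℕ} (hm : finrank 𝕜 E = m) (hn : finrank 𝕜 E = n) (hmn : m = n)
    (i : Fin m) : hS.eigenvalues hm i = hT.eigenvalues hn (Fin.cast hmn i) := by
  subst h hmn; rfl

end LinearMap.IsSymmetric

/- `svalDesc` sorts the eigenvalues of `Xᵀ * X`, which Mathlib lists in an unspecified order;
the sorted list is the reverse of the antitone enumeration behind `singularValues`. -/
theorem svalDesc_eq_singularValues {n : ℕ} (X : Matrix (Fin n) (Fin n) ℝ) (k : Fin n) :
    svalDesc X k = (Matrix.toEuclideanLin X).singularValues k := by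
  have hG : (Xᵀ * X).IsHermitian := by simpa using Matrix.isHermitian_conjTranspose_mul_self X
  set T := Matrix.toEuclideanLin X
  have hT : LinearMap.adjoint T ∘ₗ T = Matrix.toEuclideanLin (Xᵀ * X) := by
    rw [← Matrix.conjTranspose_eq_transpose_of_trivial, Matrix.toLpLin_mul_same,
      Matrix.toEuclideanLin_conjTranspose_eq_adjoint]
  have hperm : hG.eigenvalues =
      T.isSymmetric_adjoint_comp_self.eigenvalues finrank_euclideanSpace_fin ∘
        (Fintype.equivOfCardEq (Fintype.card_fin _)).symm.trans (finCongr (Fintype.card_fin n)) := by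
    ext j
    exact LinearMap.IsSymmetric.eigenvalues_congr _ _ hT.symm _ _ (Fintype.card_fin n) _
  rw [LinearMap.singularValues_fin T finrank_euclideanSpace_fin]
  unfold svalDesc
  rw [hperm,
    Tuple.comp_sort_eq_comp_rev_of_antitone (LinearMap.IsSymmetric.eigenvalues_antitone ..)]
  simp

theorem svalDesc_nonneg {n : ℕ} (X : Matrix (Fin n) (Fin n) ℝ) (k : Fin n) :
    0 ≤ svalDesc X k :=
  Real.sqrt_nonneg _

theorem svalDesc_mul_mul_le {n : ℕ} (L X R : Matrix (Fin n) (Fin n) ℝ) (hR : IsUnit R.det)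
    {c : ℝ} (hLc : ∀ i j, |L i j| ≤ c) (hRc : ∀ i j, |R i j| ≤ c) (k : Fin n) :
    svalDesc (L * X * R) k ≤ (n * c) * (n * c) * svalDesc X k := by
  have hc : 0 ≤ c := (abs_nonneg _).trans (hLc k k)
  have hsurj : Function.Surjective (toEuclideanLin R) := fun v =>
    ⟨toEuclideanLin R⁻¹ v, by
      rw [← LinearMap.comp_apply, ← toLpLin_mul_same, mul_nonsing_inv _ hR, toLpLin_one,
        LinearMap.id_apply]⟩
  rw [svalDesc_eq_singularValues, svalDesc_eq_singularValues, toLpLin_mul_same,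
    toLpLin_mul_same, LinearMap.comp_assoc]
  simpa using LinearMap.singularValues_comp_comp_le _ _ _ hsurj (by positivity) (by positivity)
    (fun w => by simpa using norm_toEuclideanLin_apply_le L hLc w)
    (fun v => by simpa using norm_toEuclideanLin_apply_le R hRc v) k

theorem Real.abs_log_sub_log_le_log {x y C : ℝ} (hx : 0 ≤ x) (hy : 0 ≤ y) (hC : 1 ≤ C)
    (hxy : x ≤ C * y) (hyx : y ≤ C * x) : |Real.log x - Real.log y| ≤ Real.log C := by
  rcases hx.eq_or_lt with rfl | hx
  · obtain rfl : y = 0 := le_antisymm (by simpa using hyx) hy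
    simpa using Real.log_nonneg hC
  have hy : 0 < y := by
    by_contra! hy0
    have : C * y ≤ 0 := mul_nonpos_of_nonneg_of_nonpos (by linarith) hy0
    linarith
  have hC0 : 0 < C := by linarith
  have h₁ := Real.log_le_log hx hxy
  have h₂ := Real.log_le_log hy hyx
  rw [Real.log_mul hC0.ne' hy.ne'] at h₁
  rw [Real.log_mul hC0.ne' hx.ne'] at h₂
  rw [abs_sub_le_iff]
  constructor <;> linarith

theorem EReal.limsup_coe_eq_of_tendsto_sub {α : Type*} {l : Filter α} [l.NeBot] {f g : α → ℝ}
    (h : Tendsto (fun x => g x - f x) l (𝓝 0)) :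
    limsup (fun x => (g x : EReal)) l = limsup (fun x => (f x : EReal)) l := by
  set u : α → EReal := fun x => f x
  set v : α → EReal := fun x => ((g x - f x : ℝ) : EReal)
  have hv : Tendsto v l (𝓝 0) := (continuous_coe_real_ereal.tendsto 0).comp h
  have hg : (fun x => (g x : EReal)) = u + v := by
    ext x
    simp only [u, v, Pi.add_apply, ← EReal.coe_add, add_sub_cancel]
  rw [hg]
  refine le_antisymm ?_ ?_
  · simpa [hv.limsup_eq] using EReal.limsup_add_le (u := u) (v := v) (f := l)
      (Or.inr (by simp [hv.limsup_eq])) (Or.inr (by simp [hv.limsup_eq]))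
  · simpa [hv.liminf_eq] using EReal.le_limsup_add (u := u) (v := v) (f := l)

theorem LE_invariant_Lyapunov_transformation_general {n : ℕ}
    (X L R : ℝ → Matrix (Fin n) (Fin n) ℝ)
    (hL : ∀ t, IsUnit (L t).det) (hR : ∀ t, IsUnit (R t).det)
    (hbound : ∃ c : ℝ, ∀ t i j,
      |L t i j| ≤ c ∧ |(L t)⁻¹ i j| ≤ c ∧ |R t i j| ≤ c ∧ |(R t)⁻¹ i j| ≤ c)
    (i : Fin n) :
    limsup (fun t : ℝ =>
        (((1 / t) * Real.log (svalDesc (L t * X t * R t) i) : ℝ) : EReal)) atTop =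
    limsup (fun t : ℝ => (((1 / t) * Real.log (svalDesc (X t) i) : ℝ) : EReal)) atTop := by
  obtain ⟨c, hc⟩ := hbound
  set C := max 1 ((n * c) * (n * c))
  have hup (t : ℝ) : svalDesc (L t * X t * R t) i ≤ C * svalDesc (X t) i :=
    (svalDesc_mul_mul_le _ _ _ (hR t) (fun a b => (hc t a b).1)
      (fun a b => (hc t a b).2.2.1) i).trans (mul_le_mul_of_nonneg_right (le_max_right _ _) (svalDesc_nonneg _ _))
  have hdown (t : ℝ) : svalDesc (X t) i ≤ C * svalDesc (L t * X t * R t) i := by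
    have h := svalDesc_mul_mul_le (L t)⁻¹ (L t * X t * R t) (R t)⁻¹
      (isUnit_nonsing_inv_det _ (hR t)) (fun a b => (hc t a b).2.1)
      (fun a b => (hc t a b).2.2.2) i
    have hX : (L t)⁻¹ * (L t * X t * R t) * (R t)⁻¹ = X t := by
      rw [Matrix.mul_assoc (L t), nonsing_inv_mul_cancel_left _ _ (hL t),
        mul_nonsing_inv_cancel_right _ _ (hR t)]
    rw [hX] at h
    exact h.trans (mul_le_mul_of_nonneg_right (le_max_right _ _) (svalDesc_nonneg _ _))
  have hlog : IsBoundedUnder (· ≤ ·) atTop fun t =>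
      ‖Real.log (svalDesc (L t * X t * R t) i) - Real.log (svalDesc (X t) i)‖ :=
    isBoundedUnder_of ⟨Real.log C, fun t => Real.abs_log_sub_log_le_log (svalDesc_nonneg _ _)
      (svalDesc_nonneg _ _) (le_max_left _ _) (hup t) (hdown t)⟩
  refine EReal.limsup_coe_eq_of_tendsto_sub ?_
  simpa [one_div, mul_sub] using tendsto_inv_atTop_zero.zero_mul_isBoundedUnder_le hlog

/-- Invariance of Lyapunov exponents under Lyapunov transformations:
if L(t), L(t)⁻¹, R(t), R(t)⁻¹ are uniformly bounded families of invertible matrices,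
then L(t)·X(t)·R(t) has the same Lyapunov exponents as X(t). -/
theorem LE_invariant_Lyapunov_transformation {n : ℕ}
    (X L R : ℝ → Matrix (Fin n) (Fin n) ℝ)
    (hX : ∀ t, IsUnit (X t).det) (hL : ∀ t, IsUnit (L t).det) (hR : ∀ t, IsUnit (R t).det)
    (hbound : ∃ c : ℝ, ∀ t i j,
      |L t i j| ≤ c ∧ |(L t)⁻¹ i j| ≤ c ∧ |R t i j| ≤ c ∧ |(R t)⁻¹ i j| ≤ c)
    (i : Fin n)
    (hfin : ∃ l : ℝ,
      limsup (fun t : ℝ => (((1 / t) * Real.log (svalDesc (X t) i) : ℝ) : EReal)) atTop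
        = (l : EReal)) :
    limsup (fun t : ℝ =>
        (((1 / t) * Real.log (svalDesc (L t * X t * R t) i) : ℝ) : EReal)) atTop =
    limsup (fun t : ℝ => (((1 / t) * Real.log (svalDesc (X t) i) : ℝ) : EReal)) atTop :=
  LE_invariant_Lyapunov_transformation_general X L R hL hR hbound i
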